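/- arXiv:2509.05137 — 2 statements merged into one kernel-verified Lean document; each statement's English description precedes it below -/
import Mathlib

section
/- Let f : [0,1] → [0,1], let C be a class of distributions on a countable domain X, and let 𝒱 be a class of adaptive adversaries containing adversaries V1 and V2 with fixed constant budgets η1 and η2. Let γ', ζ ∈ (0,1) and set γ_f = 2·max{f(η1), f(η2)} + 2γ'. If for every m ∈ ℕ the pair (V1,V2) successfully (γ_f,ζ)-confuses C-generated samples of size m, then C is not f-robustly learnable with respect to 𝒱. Moreover, if V1 = V2, then V1 is a universal f-adversary for C. -/
open scoped ENNReal NNReal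

/-- Total variation distance between two discrete distributions. -/
noncomputable def tv {X : Type*} (p q : PMF X) : ℝ :=
  (∑' x, |(p x).toReal - (q x).toReal|) / 2

/-- The distribution of an i.i.d. sample of size `m` from `p`, viewed as a multiset. -/
noncomputable def iid {X : Type*} (p : PMF X) : ℕ → PMF (Multiset X)
  | 0 => PMF.pure 0
  | n + 1 => (iid p n).bind fun s => p.map fun x => x ::ₘ s

/-- `|Q|^m` : first draw `q ∼ Q`, then an i.i.d. sample `S ∼ q^m`. -/
noncomputable def metaSample {X : Type*} (Q : PMF (PMF X)) (m : ℕ) : PMF (Multiset X) :=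
  Q.bind fun q => iid q m

/-- An adaptive adversary: a randomized map from samples (finite multisets) to samples. -/
abbrev Adversary (X : Type*) := Multiset X → PMF (Multiset X)

/-- `V(P)`: the distribution of `V S` for `S ∼ P` (including internal randomness). -/
noncomputable def advPush {X : Type*} (V : Adversary X) (P : PMF (Multiset X)) :
    PMF (Multiset X) := P.bind V

/-- An additive adversary only adds points: `S ⊆ V(S)` almost surely. -/
def IsAdditive {X : Type*} (V : Adversary X) : Prop :=
  ∀ S T, T ∈ (V S).support → S ≤ T

/-- A subtractive adversary only removes points: `V(S) ⊆ S` almost surely. -/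
def IsSubtractive {X : Type*} (V : Adversary X) : Prop :=
  ∀ S T, T ∈ (V S).support → T ≤ S

/-- Fixed constant budget `η`: `|V(S)|` depends only on `|S|` (via `c`), and for every `m`,
`η m − 1 < m·budget(V,m) ≤ η m` where `m·budget(V,m) = ||V(S)| − |S||`. -/
def FixedBudget {X : Type*} (V : Adversary X) (η : ℝ) : Prop :=
  ∃ c : ℕ → ℕ, (∀ S T, T ∈ (V S).support → Multiset.card T = c (Multiset.card S)) ∧
    ∀ m : ℕ, η * m - 1 < |(c m : ℝ) - m| ∧ |(c m : ℝ) - m| ≤ η * m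

/-- Fixed constant budget `η` for an additive adversary (`m·budget(V,m) = |V(S)| − |S|`). -/
def FixedBudgetAdd {X : Type*} (V : Adversary X) (η : ℝ) : Prop :=
  ∃ c : ℕ → ℕ, (∀ S T, T ∈ (V S).support → Multiset.card T = c (Multiset.card S)) ∧
    ∀ m : ℕ, η * m - 1 < (c m : ℝ) - m ∧ (c m : ℝ) - m ≤ η * m

/-- Fixed constant budget `η` for a subtractive adversary (`m·budget(V,m) = |S| − |V(S)|`). -/
def FixedBudgetSub {X : Type*} (V : Adversary X) (η : ℝ) : Prop :=
  ∃ c : ℕ → ℕ, (∀ S T, T ∈ (V S).support → Multiset.card T = c (Multiset.card S)) ∧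
    ∀ m : ℕ, η * m - 1 < (m : ℝ) - c m ∧ (m : ℝ) - c m ≤ η * m

/-- Probability of an event under a discrete distribution. -/
noncomputable def probEvent {β : Type*} (P : PMF β) (E : Set β) : ℝ≥0∞ :=
  P.toOuterMeasure E

/-- `A` with sample complexity `mc` learns the class `C` against adversary `V`,
up to error `bound + ε` with confidence `1 − δ` once `m ≥ mc ε δ`. -/
def RobustLearnerFor {X : Type*} (C : Set (PMF X)) (A : Multiset X → PMF X)
    (mc : ℝ → ℝ → ℕ) (V : Adversary X) (bound : ℝ) : Prop :=
  ∀ p ∈ C, ∀ ε δ : ℝ, 0 < ε → ε < 1 → 0 < δ → δ < 1 →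
    ∀ m : ℕ, mc ε δ ≤ m →
      1 - ENNReal.ofReal δ ≤
        probEvent ((iid p m).bind V) {T | tv (A T) p ≤ bound + ε}

/-- `C` is adaptively α-robustly learnable w.r.t. the single adversary `V` with budget `η`. -/
def RobustlyLearnableWrt {X : Type*} (C : Set (PMF X)) (α : ℝ)
    (V : Adversary X) (η : ℝ) : Prop :=
  ∃ A mc, RobustLearnerFor C A mc V (α * η)

/-- `V` (with budget `η`) is a universal α-adversary for `C`. -/
def UniversalAdversary {X : Type*} (C : Set (PMF X)) (α : ℝ)
    (V : Adversary X) (η : ℝ) : Prop :=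
  ¬ RobustlyLearnableWrt C α V η

/-- `C` is adaptively α-robustly learnable w.r.t. a class `𝒱` of adversaries
(each given with its budget). -/
def RobustlyLearnableWrtClass {X : Type*} (C : Set (PMF X)) (α : ℝ)
    (𝒱 : Set (Adversary X × ℝ)) : Prop :=
  ∃ A mc, ∀ Vη ∈ 𝒱, RobustLearnerFor C A mc Vη.1 (α * Vη.2)

/-- `C` is adaptively additively α-robustly learnable: one learner works simultaneously
against all additive adaptive adversaries with fixed constant budgets. -/
def AdditivelyRobustlyLearnable {X : Type*} (C : Set (PMF X)) (α : ℝ) : Prop :=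
  ∃ A mc, ∀ V : Adversary X, ∀ η : ℝ, 0 < η → η < 1 →
    IsAdditive V → FixedBudgetAdd V η → RobustLearnerFor C A mc V (α * η)

/-- `C` is adaptively subtractively α-robustly learnable. -/
def SubtractivelyRobustlyLearnable {X : Type*} (C : Set (PMF X)) (α : ℝ) : Prop :=
  ∃ A mc, ∀ V : Adversary X, ∀ η : ℝ, 0 < η → η < 1 →
    IsSubtractive V → FixedBudgetSub V η → RobustLearnerFor C A mc V (α * η)

/-- The pair `(V1, V2)` successfully `(γ,ζ)`-confuses `C`-generated samples of size `m`. -/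
def ConfusesPair {X : Type*} (C : Set (PMF X)) (V1 V2 : Adversary X)
    (γ ζ : ℝ) (m : ℕ) : Prop :=
  ∃ p ∈ C, ∃ Q : PMF (PMF X), Q.support ⊆ C ∧
    (∀ q ∈ Q.support, γ < tv p q) ∧
    tv (advPush V1 (metaSample Q m)) (advPush V2 (iid p m)) < ζ

/-- A single adversary `V` successfully `(γ,ζ)`-confuses `C`-generated samples of size `m`. -/
def Confuses {X : Type*} (C : Set (PMF X)) (V : Adversary X) (γ ζ : ℝ) (m : ℕ) : Prop :=
  ConfusesPair C V V γ ζ m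

/-- `p` is the distribution `p_{i,j,k} = (1 − 1/j)·δ_{(0,0)} + (1/j − 1/k)·U_{B_i×{2j+1}}
 + (1/k)·δ_{(i,2j+2)}` on `ℕ × ℕ`. -/
def IsPijk (B : ℕ → Finset ℕ) (i j k : ℕ) (p : PMF (ℕ × ℕ)) : Prop :=
  ∀ x : ℕ × ℕ,
    p x = (1 - ((j : ℝ≥0∞))⁻¹) * (if x = (0, 0) then 1 else 0)
      + (((j : ℝ≥0∞))⁻¹ - ((k : ℝ≥0∞))⁻¹) *
          (if x.1 ∈ B i ∧ x.2 = 2 * j + 1 then (((B i).card : ℝ≥0∞))⁻¹ else 0)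
      + ((k : ℝ≥0∞))⁻¹ * (if x = (i, 2 * j + 2) then 1 else 0)

/-- The class `C_g = {p_{i,j,g(j)} : i, j ∈ ℕ}` (for the meaningful parameters). -/
def Cg (B : ℕ → Finset ℕ) (g : ℕ → ℕ) : Set (PMF (ℕ × ℕ)) :=
  {p | ∃ i j : ℕ, 1 ≤ j ∧ j < g j ∧ (B i).Nonempty ∧ IsPijk B i j (g j) p}

/-- `g` is superlinear: `g(n)/n → ∞`. -/
def Superlinear (g : ℕ → ℕ) : Prop :=
  Filter.Tendsto (fun n => (g n : ℝ) / n) Filter.atTop Filter.atTop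

/-- `C` is f-robustly learnable w.r.t. the single adversary `V` with budget `η`. -/
def FRobustlyLearnableWrt {X : Type*} (C : Set (PMF X)) (f : ℝ → ℝ)
    (V : Adversary X) (η : ℝ) : Prop :=
  ∃ A mc, RobustLearnerFor C A mc V (f η)

/-- `C` is f-robustly learnable w.r.t. a class `𝒱` of adversaries (each with its budget). -/
def FRobustlyLearnableWrtClass {X : Type*} (C : Set (PMF X)) (f : ℝ → ℝ)
    (𝒱 : Set (Adversary X × ℝ)) : Prop :=
  ∃ A mc, ∀ Vη ∈ 𝒱, RobustLearnerFor C A mc Vη.1 (f Vη.2)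

/-- `C` is adaptively additively f-robustly learnable. -/
def AdditivelyFRobustlyLearnable {X : Type*} (C : Set (PMF X)) (f : ℝ → ℝ) : Prop :=
  ∃ A mc, ∀ V : Adversary X, ∀ η : ℝ, 0 < η → η < 1 →
    IsAdditive V → FixedBudgetAdd V η → RobustLearnerFor C A mc V (f η)

/-- `C` is adaptively subtractively f-robustly learnable. -/
def SubtractivelyFRobustlyLearnable {X : Type*} (C : Set (PMF X)) (f : ℝ → ℝ) : Prop :=
  ∃ A mc, ∀ V : Adversary X, ∀ η : ℝ, 0 < η → η < 1 →
    IsSubtractive V → FixedBudgetSub V η → RobustLearnerFor C A mc V (f η)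

section TVHelpers

variable {β : Type*}

lemma pmf_summable (p : PMF β) : Summable fun x => (p x).toReal :=
  ENNReal.summable_toReal (by simp [p.tsum_coe])

lemma summable_absdiff (p q : PMF β) :
    Summable fun x => |(p x).toReal - (q x).toReal| := by
  refine Summable.of_nonneg_of_le (fun x => abs_nonneg _) (fun x => ?_)
    ((pmf_summable p).add (pmf_summable q))
  calc |(p x).toReal - (q x).toReal| ≤ |(p x).toReal| + |(q x).toReal| := abs_sub _ _
    _ = (p x).toReal + (q x).toReal := by
        rw [abs_of_nonneg ENNReal.toReal_nonneg, abs_of_nonneg ENNReal.toReal_nonneg]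

lemma tv_symm (p q : PMF β) : tv p q = tv q p := by
  simp only [tv, abs_sub_comm]

lemma tv_triangle (p q r : PMF β) : tv p r ≤ tv p q + tv q r := by
  have h := Summable.tsum_le_tsum (f := fun x => |(p x).toReal - (r x).toReal|)
    (g := fun x => |(p x).toReal - (q x).toReal| + |(q x).toReal - (r x).toReal|)
    (fun x => abs_sub_le _ _ _) (summable_absdiff p r)
    ((summable_absdiff p q).add (summable_absdiff q r))
  rw [Summable.tsum_add (summable_absdiff p q) (summable_absdiff q r)] at h
  simp only [tv]
  linarith

lemma probEvent_mono (P : PMF β) {E F : Set β} (h : E ⊆ F) :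
    probEvent P E ≤ probEvent P F :=
  P.toOuterMeasure.mono h

lemma probEvent_le_one (P : PMF β) (E : Set β) : probEvent P E ≤ 1 :=
  le_trans (probEvent_mono P (Set.subset_univ E))
    (le_of_eq ((PMF.toOuterMeasure_apply_eq_one_iff P Set.univ).2 (Set.subset_univ _)))

lemma probEvent_ne_top (P : PMF β) (E : Set β) : probEvent P E ≠ ⊤ :=
  ne_top_of_le_ne_top ENNReal.one_ne_top (probEvent_le_one P E)

lemma probEvent_add_compl (P : PMF β) (E : Set β) :
    probEvent P E + probEvent P Eᶜ = 1 := by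
  simp only [probEvent, PMF.toOuterMeasure_apply]
  rw [← ENNReal.tsum_add, ← P.tsum_coe]
  refine tsum_congr fun x => ?_
  by_cases hx : x ∈ E <;> simp [Set.indicator_apply, hx]

lemma probEvent_toReal (P : PMF β) (E : Set β) :
    (probEvent P E).toReal = ∑' x, E.indicator (fun x => (P x).toReal) x := by
  rw [probEvent, PMF.toOuterMeasure_apply, ENNReal.tsum_toReal_eq]
  · refine tsum_congr fun x => ?_
    by_cases hx : x ∈ E <;> simp [Set.indicator_apply, hx]
  · intro x
    by_cases hx : x ∈ E <;> simp [Set.indicator_apply, hx, PMF.apply_ne_top]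

lemma summable_ind (P : PMF β) (E : Set β) :
    Summable (E.indicator fun x => (P x).toReal) :=
  (pmf_summable P).of_nonneg_of_le
    (fun x => Set.indicator_nonneg (fun y _ => ENNReal.toReal_nonneg) x)
    (fun x => Set.indicator_le_self' (fun y _ => ENNReal.toReal_nonneg) x)

lemma probEvent_toReal_add_compl (P : PMF β) (E : Set β) :
    (probEvent P E).toReal + (probEvent P Eᶜ).toReal = 1 := by
  rw [← ENNReal.toReal_add (probEvent_ne_top P E) (probEvent_ne_top P Eᶜ),
    probEvent_add_compl]
  rfl

lemma probEvent_toReal_sub_le_tv (P1 P2 : PMF β) (E : Set β) :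
    (probEvent P1 E).toReal - (probEvent P2 E).toReal ≤ tv P1 P2 := by
  set d : β → ℝ := fun x => |(P1 x).toReal - (P2 x).toReal| with hd
  set f1 := E.indicator fun x => (P1 x).toReal
  set f2 := E.indicator fun x => (P2 x).toReal
  set g1 := Eᶜ.indicator fun x => (P1 x).toReal
  set g2 := Eᶜ.indicator fun x => (P2 x).toReal
  have hf1 : Summable f1 := summable_ind P1 E
  have hf2 : Summable f2 := summable_ind P2 E
  have hg1 : Summable g1 := summable_ind P1 Eᶜ
  have hg2 : Summable g2 := summable_ind P2 Eᶜ
  have hdsum : Summable d := summable_absdiff P1 P2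
  have key : (∑' x, f1 x - ∑' x, f2 x) + (∑' x, g2 x - ∑' x, g1 x) ≤ ∑' x, d x := by
    rw [← Summable.tsum_sub hf1 hf2, ← Summable.tsum_sub hg2 hg1, ← Summable.tsum_add (hf1.sub hf2) (hg2.sub hg1)]
    refine Summable.tsum_le_tsum (fun x => ?_) ((hf1.sub hf2).add (hg2.sub hg1)) hdsum
    by_cases hx : x ∈ E
    · have hx' : x ∉ Eᶜ := by simp [hx]
      simp only [f1, f2, g1, g2, Set.indicator_of_mem hx, Set.indicator_of_notMem hx']
      simpa [hd] using le_abs_self ((P1 x).toReal - (P2 x).toReal)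
    · have hx' : x ∈ Eᶜ := hx
      simp only [f1, f2, g1, g2, Set.indicator_of_notMem hx, Set.indicator_of_mem hx']
      have := neg_abs_le ((P1 x).toReal - (P2 x).toReal)
      simp only [hd]
      linarith [le_abs_self ((P2 x).toReal - (P1 x).toReal),
        abs_sub_comm ((P2 x).toReal) ((P1 x).toReal)]
  have e1 : (probEvent P1 E).toReal = ∑' x, f1 x := probEvent_toReal P1 E
  have e2 : (probEvent P2 E).toReal = ∑' x, f2 x := probEvent_toReal P2 E
  have e1' : (probEvent P1 Eᶜ).toReal = ∑' x, g1 x := probEvent_toReal P1 Eᶜ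
  have e2' : (probEvent P2 Eᶜ).toReal = ∑' x, g2 x := probEvent_toReal P2 Eᶜ
  have c1 := probEvent_toReal_add_compl P1 E
  have c2 := probEvent_toReal_add_compl P2 E
  simp only [tv]
  rw [e1, e2]
  rw [e1, e1'] at c1
  rw [e2, e2'] at c2
  linarith

lemma probEvent_bind (P : PMF β) {γ : Type*} (g : β → PMF γ) (E : Set γ) :
    probEvent (P.bind g) E = ∑' a, P a * probEvent (g a) E :=
  PMF.toOuterMeasure_bind_apply P g E

end TVHelpers

lemma key_lemma {X : Type*} (C : Set (PMF X)) (V1 V2 : Adversary X)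
    (b1 b2 γ γ' ζ : ℝ) (hγ'0 : 0 < γ') (hγ'1 : γ' < 1) (hζ0 : 0 < ζ) (hζ1 : ζ < 1)
    (hγ : b1 + b2 + 2 * γ' ≤ γ)
    (A : Multiset X → PMF X) (mc : ℝ → ℝ → ℕ)
    (h1 : RobustLearnerFor C A mc V1 b1) (h2 : RobustLearnerFor C A mc V2 b2)
    (hconf : ∀ m : ℕ, ConfusesPair C V1 V2 γ ζ m) : False := by
  set δ : ℝ := (1 - ζ) / 4 with hδdef
  have hδ0 : 0 < δ := by simp only [hδdef]; linarith
  have hδ1 : δ < 1 := by simp only [hδdef]; linarith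
  set m := mc γ' δ with hm
  obtain ⟨p, hpC, Q, hQC, hQγ, htv⟩ := hconf m
  set E : Set (Multiset X) := {T | ∃ q ∈ Q.support, tv (A T) q ≤ b1 + γ'} with hE
  have hP1 : 1 - ENNReal.ofReal δ ≤ probEvent (advPush V1 (metaSample Q m)) E := by
    have heq : advPush V1 (metaSample Q m) = Q.bind fun q => (iid q m).bind V1 := by
      simp [advPush, metaSample, PMF.bind_bind]
    rw [heq, probEvent_bind]
    calc 1 - ENNReal.ofReal δ = (∑' q, Q q) * (1 - ENNReal.ofReal δ) := by
          rw [Q.tsum_coe, one_mul]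
      _ = ∑' q, Q q * (1 - ENNReal.ofReal δ) := ENNReal.tsum_mul_right.symm
      _ ≤ ∑' q, Q q * probEvent ((iid q m).bind V1) E := by
          refine ENNReal.tsum_le_tsum fun q => ?_
          by_cases hq : q ∈ Q.support
          · refine mul_le_mul_right ?_ _
            refine le_trans (h1 q (hQC hq) γ' δ hγ'0 hγ'1 hδ0 hδ1 m le_rfl) ?_
            exact probEvent_mono _ fun T hT => ⟨q, hq, hT⟩
          · rw [(Q.apply_eq_zero_iff q).2 hq]
            simp
  set S2 : Set (Multiset X) := {T | tv (A T) p ≤ b2 + γ'} with hS2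
  have hdisj : E ⊆ S2ᶜ := by
    rintro T ⟨q, hq, hTq⟩ hTp
    have hpq := hQγ q hq
    have htri := tv_triangle p (A T) q
    rw [tv_symm p (A T)] at htri
    simp only [hS2, Set.mem_setOf_eq] at hTp
    linarith
  have hgood : 1 - ENNReal.ofReal δ ≤ probEvent ((iid p m).bind V2) S2 :=
    h2 p hpC γ' δ hγ'0 hγ'1 hδ0 hδ1 m le_rfl
  have hP2 : probEvent ((iid p m).bind V2) E ≤ ENNReal.ofReal δ := by
    refine le_trans (probEvent_mono _ hdisj) ?_
    have hc := probEvent_add_compl ((iid p m).bind V2) S2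
    have hb : probEvent ((iid p m).bind V2) S2ᶜ =
        1 - probEvent ((iid p m).bind V2) S2 := by
      exact ENNReal.eq_sub_of_add_eq (probEvent_ne_top _ _) ((add_comm _ _).trans hc)
    rw [hb]
    refine le_trans (tsub_le_tsub_left hgood 1) ?_
    exact tsub_le_iff_right.mpr le_add_tsub
  have hP2' : probEvent (advPush V2 (iid p m)) E ≤ ENNReal.ofReal δ := hP2
  have hkey := probEvent_toReal_sub_le_tv (advPush V1 (metaSample Q m))
    (advPush V2 (iid p m)) E
  have hr1 : 1 - δ ≤ (probEvent (advPush V1 (metaSample Q m)) E).toReal := by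
    have := ENNReal.toReal_mono (probEvent_ne_top _ _) hP1
    rw [← ENNReal.ofReal_one, ← ENNReal.ofReal_sub _ (le_of_lt hδ0),
      ENNReal.toReal_ofReal (by linarith)] at this
    exact this
  have hr2 : (probEvent (advPush V2 (iid p m)) E).toReal ≤ δ := by
    have := ENNReal.toReal_mono ENNReal.ofReal_ne_top hP2'
    rwa [ENNReal.toReal_ofReal (le_of_lt hδ0)] at this
  linarith

/-- (f-robust version of Statement 3.) If for every `m` the pair `(V1,V2)`
(members of `𝒱`, with fixed constant budgets `η1, η2`) successfully
`(2·max{f(η1),f(η2)} + 2γ', ζ)`-confuses `C`-generated samples of size `m`, then `C` is not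
f-robustly learnable w.r.t. `𝒱`; and if `V1 = V2` then `V1` is a universal f-adversary. -/
theorem stmt13 {X : Type*} [Countable X] (f : ℝ → ℝ)
    (hf : ∀ x ∈ Set.Icc (0 : ℝ) 1, f x ∈ Set.Icc (0 : ℝ) 1)
    (C : Set (PMF X)) (𝒱 : Set (Adversary X × ℝ)) (V1 V2 : Adversary X) (η1 η2 : ℝ)
    (hV1 : (V1, η1) ∈ 𝒱) (hV2 : (V2, η2) ∈ 𝒱)
    (hη1 : η1 ∈ Set.Ioo (0 : ℝ) 1) (hη2 : η2 ∈ Set.Ioo (0 : ℝ) 1)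
    (hb1 : FixedBudget V1 η1) (hb2 : FixedBudget V2 η2)
    (γ' ζ : ℝ) (hγ' : γ' ∈ Set.Ioo (0 : ℝ) 1) (hζ : ζ ∈ Set.Ioo (0 : ℝ) 1)
    (hconf : ∀ m : ℕ, ConfusesPair C V1 V2 (2 * max (f η1) (f η2) + 2 * γ') ζ m) :
    ¬ FRobustlyLearnableWrtClass C f 𝒱 ∧
      (V1 = V2 → ¬ FRobustlyLearnableWrt C f V1 η1) := by
  have hmax1 : f η1 ≤ max (f η1) (f η2) := le_max_left _ _
  have hmax2 : f η2 ≤ max (f η1) (f η2) := le_max_right _ _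
  constructor
  · rintro ⟨A, mc, hA⟩
    exact key_lemma C V1 V2 (f η1) (f η2) _ γ' ζ hγ'.1 hγ'.2 hζ.1 hζ.2
      (by linarith) A mc (hA (V1, η1) hV1) (hA (V2, η2) hV2) hconf
  · rintro hV ⟨A, mc, hA⟩
    subst hV
    exact key_lemma C V1 V1 (f η1) (f η1) _ γ' ζ hγ'.1 hγ'.2 hζ.1 hζ.2
      (by linarith) A mc hA hA hconf
end

section
/- Let j,k ∈ ℕ with 1 ≤ j < k, let n ≥ 1, and let i, i' be indices of finite sets with B_{i'} ⊆ B_i, |B_{i'}| = 2^n, and |B_i| = 2^{2^n}. Then d_TV(p_{i,j,k}, p_{i',j,k}) ≥ (1/2)·(1/j − 1/k). -/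
open scoped ENNReal NNReal

/-! On the row `ℕ × {2j+1}` both distributions carry mass `1/j - 1/k`, spread uniformly over
`B i` and `B i'` respectively. As `2 |B i'| ≤ |B i|`, at least half of `B i` lies outside `B i'`,
so the event `(B i \ B i') × {2j+1}` has `p`-mass at least `(1/j - 1/k)/2` and `q`-mass zero;
the total variation distance dominates `p(E) - q(E)` for every event `E`. -/

namespace PMF

variable {X : Type*}

lemma summable_toReal (p : PMF X) : Summable fun x => (p x).toReal :=
  ENNReal.summable_toReal (p.tsum_coe ▸ ENNReal.one_ne_top)

lemma tsum_toReal (p : PMF X) : ∑' x, (p x).toReal = 1 := by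
  rw [← ENNReal.tsum_toReal_eq p.apply_ne_top, p.tsum_coe, ENNReal.toReal_one]

/-- Both sides have total mass one, so the excess of `p` over `q` on `F` is matched by an
equal deficit off `F` and is counted twice in `∑' |p - q|`. -/
lemma sum_sub_le_tv (p q : PMF X) (F : Finset X) :
    ∑ x ∈ F, ((p x).toReal - (q x).toReal) ≤ tv p q := by
  set f : X → ℝ := fun x => (p x).toReal - (q x).toReal
  have hf : Summable f := p.summable_toReal.sub q.summable_toReal
  have hf0 : ∑' x, f x = 0 := by
    rw [p.summable_toReal.tsum_sub q.summable_toReal, p.tsum_toReal, q.tsum_toReal, sub_self]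
  have hind : Summable ((F : Set X).indicator f) := hf.indicator _
  calc ∑ x ∈ F, f x = (∑' x, (2 * (F : Set X).indicator f x - f x)) / 2 := by
        rw [(hind.mul_left 2).tsum_sub hf, tsum_mul_left, hf0, ← sum_eq_tsum_indicator]; ring
    _ ≤ tv p q := by
        refine div_le_div_of_nonneg_right ((hind.mul_left 2 |>.sub hf).tsum_le_tsum
          (fun x => ?_) hf.abs) zero_le_two
        by_cases hx : x ∈ (F : Set X)
        · rw [Set.indicator_of_mem hx]; linarith [le_abs_self (f x)]
        · rw [Set.indicator_of_notMem hx]; linarith [neg_le_abs (f x)]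

end PMF

open Finset

lemma Finset.card_le_two_mul_card_sdiff {α : Type*} [DecidableEq α] {s t : Finset α}
    (h : 2 * #t ≤ #s) : #s ≤ 2 * #(s \ t) := by
  have := le_card_sdiff t s
  omega

section Pijk

variable {B : ℕ → Finset ℕ} {i j k : ℕ} {p : PMF (ℕ × ℕ)}

lemma IsPijk.toReal_apply_row (hp : IsPijk B i j k p) (hj : 0 < j) (hjk : j ≤ k) (b : ℕ) :
    (p (b, 2 * j + 1)).toReal = if b ∈ B i then ((j : ℝ)⁻¹ - (k : ℝ)⁻¹) / #(B i) else 0 := by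
  have hmass : ((j : ℝ≥0∞)⁻¹ - (k : ℝ≥0∞)⁻¹).toReal = (j : ℝ)⁻¹ - (k : ℝ)⁻¹ := by
    rw [ENNReal.toReal_sub_of_le (by gcongr) (by simpa using hj.ne'), ENNReal.toReal_inv,
      ENNReal.toReal_inv, ENNReal.toReal_natCast, ENNReal.toReal_natCast]
  rw [hp]
  split_ifs with hb <;> simp_all [div_eq_mul_inv]

lemma IsPijk.mul_card_sdiff_div_le_tv {i' : ℕ} {q : PMF (ℕ × ℕ)} (hp : IsPijk B i j k p)
    (hq : IsPijk B i' j k q) (hj : 0 < j) (hjk : j ≤ k) :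
    ((j : ℝ)⁻¹ - (k : ℝ)⁻¹) * #(B i \ B i') / #(B i) ≤ tv p q := by
  refine le_of_eq_of_le ?_ (PMF.sum_sub_le_tv p q ((B i \ B i') ×ˢ {2 * j + 1}))
  rw [sum_product, sum_congr rfl fun b hb => by
    rw [sum_singleton, hp.toReal_apply_row hj hjk, hq.toReal_apply_row hj hjk,
      if_pos (mem_sdiff.1 hb).1, if_neg (mem_sdiff.1 hb).2, sub_zero]]
  rw [sum_const, nsmul_eq_mul]
  ring

end Pijk

theorem stmt17_general (B : ℕ → Finset ℕ) (i i' j k n : ℕ)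
    (hj : 1 ≤ j) (hjk : j < k)
    (hci' : (B i').card = 2 ^ n) (hci : (B i).card = 2 ^ 2 ^ n)
    (p q : PMF (ℕ × ℕ)) (hp : IsPijk B i j k p) (hq : IsPijk B i' j k q) :
    (1 / 2) * (1 / (j : ℝ) - 1 / (k : ℝ)) ≤ tv p q := by
  have hcard : #(B i) ≤ 2 * #(B i \ B i') := by
    refine card_le_two_mul_card_sdiff ?_
    rw [hci', hci, ← pow_succ']
    exact Nat.pow_le_pow_right two_pos Nat.lt_two_pow_self
  have hinv : (k : ℝ)⁻¹ ≤ (j : ℝ)⁻¹ := by gcongr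
  have hpos : (0 : ℝ) < #(B i) := by rw [hci]; positivity
  refine le_trans ?_ (hp.mul_card_sdiff_div_le_tv hq hj hjk.le)
  rw [le_div_iff₀ hpos]
  simp only [one_div]
  have hcardR : (#(B i) : ℝ) ≤ 2 * #(B i \ B i') := by exact_mod_cast hcard
  nlinarith

/-- If `B_{i'} ⊆ B_i`, `|B_{i'}| = 2^n` and `|B_i| = 2^{2^n}` (with
`n ≥ 1`, `1 ≤ j < k`), then `d_TV(p_{i,j,k}, p_{i',j,k}) ≥ (1/2)(1/j − 1/k)`. -/
theorem stmt17 (B : ℕ → Finset ℕ) (i i' j k n : ℕ)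
    (hj : 1 ≤ j) (hjk : j < k) (hn : 1 ≤ n)
    (hsub : B i' ⊆ B i) (hci' : (B i').card = 2 ^ n) (hci : (B i).card = 2 ^ 2 ^ n)
    (p q : PMF (ℕ × ℕ)) (hp : IsPijk B i j k p) (hq : IsPijk B i' j k q) :
    (1 / 2) * (1 / (j : ℝ) - 1 / (k : ℝ)) ≤ tv p q :=
  stmt17_general B i i' j k n hj hjk hci' hci p q hp hq
end
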